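/- arXiv:2510.03168 — 2 statements merged into one kernel-verified Lean document; each statement's English description precedes it below -/
import Mathlib

section
/- Let M be a smooth real hypersurface in ℂⁿ, x₀ ∈ M, and 1 ≤ q < n. Then Δ_q(M,x₀) is well-defined, i.e. if r and r′ are two smooth defining functions for M near x₀, the value of Δ_q(M,x₀) computed using r equals the value computed using r′. -/
open Filter Topology Complex
open scoped ENNReal

set_option synthInstance.maxHeartbeats 1000000
set_option maxHeartbeats 1000000

noncomputable section

/-- `ℂⁿ` realized as `Fin n → ℂ`. -/
abbrev Cn (n : ℕ) : Type := Fin n → ℂ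

/-- The order of vanishing of a map `u` at a point `x`: the order of the first
non-vanishing (real) iterated derivative of `u` at `x` (`⊤` if all vanish). -/
noncomputable def vOrder {E F : Type*} [NormedAddCommGroup E] [NormedSpace ℝ E]
    [NormedAddCommGroup F] [NormedSpace ℝ F] (u : E → F) (x : E) : ℕ∞ :=
  ⨅ (m : ℕ) (_ : iteratedFDeriv ℝ m u x ≠ 0), (m : ℕ∞)

/-- The order `ord₀ φ` of a holomorphic curve `φ` through `x₀`:
the minimum over the components of the order of the first non-vanishing derivative at `0`. -/
noncomputable def curveOrd {n : ℕ} (x₀ : Cn n) (φ : ℂ → Cn n) : ℕ∞ :=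
  vOrder (fun t => φ t - x₀) 0

/-- The normalized ratio of two vanishing orders, as an extended nonnegative real. -/
noncomputable def typeRatio (a b : ℕ∞) : ℝ≥0∞ := (a : ℝ≥0∞) / (b : ℝ≥0∞)

/-- A germ of a (nonconstant) holomorphic curve at `x₀ ∈ ℂⁿ`. -/
structure IsCurveGerm (n : ℕ) (x₀ : Cn n) (φ : ℂ → Cn n) : Prop where
  analyticAt : AnalyticAt ℂ φ 0
  init : φ 0 = x₀
  nonconst : ¬ (∀ᶠ t in 𝓝 (0 : ℂ), φ t = x₀)

/-- The common zero locus of the affine forms `z ↦ wᵢ (z - x₀)`. -/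
def zeroLocus {n m : ℕ} (x₀ : Cn n) (w : Fin m → (Cn n →L[ℂ] ℂ)) : Set (Cn n) :=
  {z | ∀ i, w i (z - x₀) = 0}

/-- The D'Angelo `1`-type of the hypersurface `{r = 0}` at `x₀`, computed using only
holomorphic curves whose image lies (near `0`) in the set `Z`. -/
noncomputable def Delta1On (n : ℕ) (r : Cn n → ℝ) (x₀ : Cn n) (Z : Set (Cn n)) : ℝ≥0∞ :=
  ⨆ (φ : ℂ → Cn n) (_ : IsCurveGerm n x₀ φ) (_ : ∀ᶠ t in 𝓝 (0 : ℂ), φ t ∈ Z),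
    typeRatio (vOrder (fun t => r (φ t)) 0) (curveOrd x₀ φ)

/-- The D'Angelo `1`-type `Δ₁(M, x₀)` of the hypersurface `M = {r = 0}` at `x₀`. -/
noncomputable def Delta1Hyp (n : ℕ) (r : Cn n → ℝ) (x₀ : Cn n) : ℝ≥0∞ :=
  Delta1On n r x₀ Set.univ

/-- The D'Angelo `q`-type `Δ_q(M, x₀)`: the infimum over all non-degenerate sets of `q - 1`
linear forms of the `1`-type computed with curves lying in the zero locus of the forms. -/
noncomputable def DeltaQHyp (n q : ℕ) (r : Cn n → ℝ) (x₀ : Cn n) : ℝ≥0∞ :=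
  ⨅ (w : Fin (q - 1) → (Cn n →L[ℂ] ℂ)) (_ : LinearIndependent ℂ w),
    Delta1On n r x₀ (zeroLocus x₀ w)

/-- `v` is the generic value of `F` on the set of points satisfying `P`: there is a dense open
set of parameters, all satisfying `P`, on which `F` is constantly equal to `v`. -/
def IsGenericValue {α β : Type*} [TopologicalSpace α] (P : α → Prop) (F : α → β) (v : β) : Prop :=
  ∃ U : Set α, IsOpen U ∧ Dense U ∧ (∀ a ∈ U, P a) ∧ ∀ a ∈ U, F a = v

/-- `v` is the generic D'Angelo `q`-type `Δ̃_q(M, x₀)` of the hypersurface `M = {r = 0}`: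
the generic value, over non-degenerate sets of `q - 1` linear forms, of the `1`-type computed
with curves lying in the zero locus of the forms. -/
def TildeDeltaQHypIs (n q : ℕ) (r : Cn n → ℝ) (x₀ : Cn n) (v : ℝ≥0∞) : Prop :=
  IsGenericValue (fun w : Fin (q - 1) → (Cn n →L[ℂ] ℂ) => LinearIndependent ℂ w)
    (fun w => Delta1On n r x₀ (zeroLocus x₀ w)) v

noncomputable instance germCAlgebra {n : ℕ} (l : Filter (Cn n)) : Algebra ℂ (l.Germ ℂ) :=
  ((Filter.Germ.coeRingHom l).comp (Pi.constRingHom (Cn n) ℂ)).toAlgebra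

/-- The local ring `𝒪_{x₀}` of germs of holomorphic functions at `x₀ ∈ ℂⁿ`, realized as the
subalgebra of germs at `x₀` of functions analytic at `x₀`. -/
noncomputable def holoGerms (n : ℕ) (x₀ : Cn n) : Subalgebra ℂ ((𝓝 x₀).Germ ℂ) where
  carrier := {g | ∃ f : Cn n → ℂ, AnalyticAt ℂ f x₀ ∧ g = (f : (𝓝 x₀).Germ ℂ)}
  mul_mem' := by
    rintro a b ⟨f, hf, rfl⟩ ⟨g, hg, rfl⟩
    exact ⟨f * g, hf.mul hg, rfl⟩
  add_mem' := by
    rintro a b ⟨f, hf, rfl⟩ ⟨g, hg, rfl⟩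
    exact ⟨f + g, hf.add hg, rfl⟩
  algebraMap_mem' := fun c => ⟨fun _ => c, analyticAt_const, rfl⟩

/-- The germ at `x₀` of a function analytic at `x₀`, as an element of `𝒪_{x₀}`. -/
noncomputable def germOf {n : ℕ} {x₀ : Cn n} (f : Cn n → ℂ) (hf : AnalyticAt ℂ f x₀) :
    holoGerms n x₀ :=
  ⟨(f : (𝓝 x₀).Germ ℂ), ⟨f, hf, rfl⟩⟩

theorem affineForm_analyticAt {n : ℕ} (x₀ : Cn n) (w : Cn n →L[ℂ] ℂ) :
    AnalyticAt ℂ (fun z => w (z - x₀)) x₀ :=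
  (w.analyticAt _).comp (analyticAt_id.sub analyticAt_const)

/-- The ideal of `𝒪_{x₀}` generated by the affine-linear forms `z ↦ wᵢ (z - x₀)`. -/
noncomputable def formsIdeal {n m : ℕ} (x₀ : Cn n) (w : Fin m → (Cn n →L[ℂ] ℂ)) :
    Ideal (holoGerms n x₀) :=
  Ideal.span (Set.range fun i => germOf (fun z => w i (z - x₀)) (affineForm_analyticAt x₀ (w i)))

/-- The D'Angelo `1`-type `Δ₁(J, x₀)` of an ideal `J ⊆ 𝒪_{x₀}`:
`sup_φ inf_{g ∈ J} ord₀(g ∘ φ) / ord₀ φ`. -/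
noncomputable def Delta1Ideal (n : ℕ) (x₀ : Cn n) (J : Ideal (holoGerms n x₀)) : ℝ≥0∞ :=
  ⨆ (φ : ℂ → Cn n) (_ : IsCurveGerm n x₀ φ),
    ⨅ (f : Cn n → ℂ) (hf : AnalyticAt ℂ f x₀) (_ : germOf f hf ∈ J),
      typeRatio (vOrder (fun t => f (φ t)) 0) (curveOrd x₀ φ)

/-- The D'Angelo `q`-type `Δ_q(J, x₀)` of an ideal `J ⊆ 𝒪_{x₀}`: the infimum over all
non-degenerate sets of `q - 1` linear forms of `Δ₁` of the enlarged ideal `(J, w₁, …, w_{q-1})`. -/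
noncomputable def DeltaQIdeal (n q : ℕ) (x₀ : Cn n) (J : Ideal (holoGerms n x₀)) : ℝ≥0∞ :=
  ⨅ (w : Fin (q - 1) → (Cn n →L[ℂ] ℂ)) (_ : LinearIndependent ℂ w),
    Delta1Ideal n x₀ (J ⊔ formsIdeal x₀ w)

/-- `v` is the generic D'Angelo `q`-type `Δ̃_q(J, x₀)` of an ideal `J ⊆ 𝒪_{x₀}`: the generic
value, over non-degenerate sets of `q - 1` linear forms, of `Δ₁((J, w₁, …, w_{q-1}), x₀)`. -/
def TildeDeltaQIdealIs (n q : ℕ) (x₀ : Cn n) (J : Ideal (holoGerms n x₀)) (v : ℝ≥0∞) : Prop :=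
  IsGenericValue (fun w : Fin (q - 1) → (Cn n →L[ℂ] ℂ) => LinearIndependent ℂ w)
    (fun w => Delta1Ideal n x₀ (J ⊔ formsIdeal x₀ w)) v

/-- The codimension `D(J, x₀) = dim_ℂ 𝒪_{x₀} / J` of an ideal `J ⊆ 𝒪_{x₀}`. -/
noncomputable def idealCodim (n : ℕ) (x₀ : Cn n) (J : Ideal (holoGerms n x₀)) : ℕ∞ :=
  (Module.rank ℂ ((holoGerms n x₀) ⧸ J)).toENat

/-- A germ at `x₀` of a `q`-dimensional complex analytic variety in `ℂⁿ`: a set through `x₀`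
which near `x₀` is the common zero set of finitely many holomorphic functions and has
(Hausdorff) dimension `2q`, i.e. complex dimension `q`, at `x₀`. -/
structure VarietyGerm (n q : ℕ) (x₀ : Cn n) where
  carrier : Set (Cn n)
  mem : x₀ ∈ carrier
  analytic : ∃ U ∈ 𝓝 x₀, ∃ (N : ℕ) (F : Fin N → Cn n → ℂ),
    (∀ j, ∀ z ∈ U, AnalyticAt ℂ (F j) z) ∧ carrier ∩ U = {z | z ∈ U ∧ ∀ j, F j z = 0}
  dimEq : ∀ᶠ U in (𝓝 x₀).smallSets, dimH (carrier ∩ U) = (2 * q : ℕ)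

/-- The set `A` coincides, as a germ at `x₀`, with the union of the images of the finitely many
irreducible holomorphic curves `γ k` through `x₀`. -/
def IntersectsInCurves {n P : ℕ} (x₀ : Cn n) (A : Set (Cn n)) (γ : Fin P → ℂ → Cn n) : Prop :=
  (∀ k, IsCurveGerm n x₀ (γ k)) ∧
  ∃ U ∈ 𝓝 x₀, ∃ V : Fin P → Set ℂ, (∀ k, V k ∈ 𝓝 (0 : ℂ)) ∧
    A ∩ U = (⋃ k, γ k '' V k) ∩ U

/-- `t` is Catlin's generic order of contact `τ(V^q, x₀)` of the boundary `{r = 0}` with the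
`q`-dimensional variety `V`: for every `S = {w₁ = ⋯ = w_{q-1} = 0}` in a dense open subset of the
Grassmannian `G^{n-q+1}`, `V ∩ S` is a finite union of holomorphic curves and
`t = max_k ord₀(r ∘ γ^k_S) / ord₀ γ^k_S`. -/
def TauVarHypIs (n q : ℕ) (r : Cn n → ℝ) (x₀ : Cn n) (V : VarietyGerm n q x₀) (t : ℝ≥0∞) :
    Prop :=
  ∃ U : Set (Fin (q - 1) → (Cn n →L[ℂ] ℂ)), IsOpen U ∧ Dense U ∧
    (∀ w ∈ U, LinearIndependent ℂ w) ∧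
    ∀ w ∈ U, ∃ (P : ℕ) (γ : Fin P → ℂ → Cn n),
      IntersectsInCurves x₀ (V.carrier ∩ zeroLocus x₀ w) γ ∧
      t = ⨆ k : Fin P, typeRatio (vOrder (fun s => r (γ k s)) 0) (curveOrd x₀ (γ k))

/-- The Catlin `q`-type `D_q(M, x₀)` of the hypersurface `M = {r = 0}`:
the supremum over all germs of `q`-dimensional varieties `V` through `x₀` of `τ(V, x₀)`. -/
noncomputable def CatlinQHyp (n q : ℕ) (r : Cn n → ℝ) (x₀ : Cn n) : ℝ≥0∞ :=
  ⨆ (V : VarietyGerm n q x₀) (t : ℝ≥0∞) (_ : TauVarHypIs n q r x₀ V t), t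

/-- `t` is Catlin's generic order of contact `τ(f, V^q)` of a holomorphic function `f` with the
`q`-dimensional variety `V`. -/
def TauFunIs (n q : ℕ) (x₀ : Cn n) (f : Cn n → ℂ) (V : VarietyGerm n q x₀) (t : ℝ≥0∞) : Prop :=
  ∃ U : Set (Fin (q - 1) → (Cn n →L[ℂ] ℂ)), IsOpen U ∧ Dense U ∧
    (∀ w ∈ U, LinearIndependent ℂ w) ∧
    ∀ w ∈ U, ∃ (P : ℕ) (γ : Fin P → ℂ → Cn n),
      IntersectsInCurves x₀ (V.carrier ∩ zeroLocus x₀ w) γ ∧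
      t = ⨆ k : Fin P, typeRatio (vOrder (fun s => f (γ k s)) 0) (curveOrd x₀ (γ k))

/-- Catlin's `τ(J, V^q) = min_{f ∈ J} τ(f, V^q)` for an ideal `J ⊆ 𝒪_{x₀}`. -/
noncomputable def tauIdealVar (n q : ℕ) (x₀ : Cn n) (J : Ideal (holoGerms n x₀))
    (V : VarietyGerm n q x₀) : ℝ≥0∞ :=
  ⨅ (f : Cn n → ℂ) (hf : AnalyticAt ℂ f x₀) (_ : germOf f hf ∈ J) (t : ℝ≥0∞)
    (_ : TauFunIs n q x₀ f V t), t

/-- The Catlin `q`-type `D_q(J, x₀)` of an ideal `J ⊆ 𝒪_{x₀}`. -/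
noncomputable def CatlinQIdeal (n q : ℕ) (x₀ : Cn n) (J : Ideal (holoGerms n x₀)) : ℝ≥0∞ :=
  ⨆ V : VarietyGerm n q x₀, tauIdealVar n q x₀ J V

/-- The Levi form of `r` at `x₀` evaluated at `v`, expressed through the real Hessian `H` as
`(1/4) (H(v,v) + H(iv,iv))`. -/
noncomputable def leviForm (n : ℕ) (r : Cn n → ℝ) (x₀ : Cn n) (v : Cn n) : ℝ :=
  (iteratedFDeriv ℝ 2 r x₀ ![v, v] +
    iteratedFDeriv ℝ 2 r x₀ ![Complex.I • v, Complex.I • v]) / 4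

/-- The complex tangent space `T^{1,0}_{x₀} {r = 0}`, i.e. the kernel of `∂r(x₀)`. -/
def cxTangent (n : ℕ) (r : Cn n → ℝ) (x₀ : Cn n) : Set (Cn n) :=
  {v | fderiv ℝ r x₀ v = 0 ∧ fderiv ℝ r x₀ (Complex.I • v) = 0}

/-- `{r = 0}` is pseudoconvex at `x₀`: the Levi form of `r` at `x₀` is positive semi-definite
on the complex tangent space. -/
def PseudoconvexAt (n : ℕ) (r : Cn n → ℝ) (x₀ : Cn n) : Prop :=
  ∀ v ∈ cxTangent n r x₀, 0 ≤ leviForm n r x₀ v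

/-- The (positive semi-definite) Levi form of `r` at `x₀` has rank `p`: `p` is the largest
dimension of a complex subspace of the complex tangent space on which the Levi form is
positive definite. -/
def LeviRankIs (n : ℕ) (r : Cn n → ℝ) (x₀ : Cn n) (p : ℕ) : Prop :=
  IsGreatest {m : ℕ | ∃ W : Submodule ℂ (Cn n), (W : Set (Cn n)) ⊆ cxTangent n r x₀ ∧
    Module.finrank ℂ W = m ∧ ∀ v ∈ W, v ≠ 0 → 0 < leviForm n r x₀ v} p

/-- The Wirtinger derivative `∂/∂t` of a function `u : ℂ → ℂ`. -/
noncomputable def wdt (u : ℂ → ℂ) : ℂ → ℂ :=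
  fun z => (fderiv ℝ u z 1 - Complex.I * fderiv ℝ u z Complex.I) / 2

/-- The Wirtinger derivative `∂/∂t̄` of a function `u : ℂ → ℂ`. -/
noncomputable def wdtbar (u : ℂ → ℂ) : ℂ → ℂ :=
  fun z => (fderiv ℝ u z 1 + Complex.I * fderiv ℝ u z Complex.I) / 2

/-- The degree-`k` Taylor polynomial (the `k`-jet) of `r` at `x₀`. -/
noncomputable def taylorPoly (n k : ℕ) (r : Cn n → ℝ) (x₀ : Cn n) : Cn n → ℝ :=
  fun z => ∑ m ∈ Finset.range (k + 1),
    ((m.factorial : ℝ)⁻¹) • iteratedFDeriv ℝ m r x₀ (fun _ => z - x₀)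

/-- `q`-positivity (the `q`-analogue of D'Angelo's property P) of the hypersurface `{r = 0}` at
`x₀`: for some `k > Δ_q` and some holomorphic decomposition `Re h + ‖f‖² - ‖g‖²` of the `k`-jet of
`r` at `x₀` by holomorphic polynomials, every germ of a holomorphic curve `φ` at `x₀` annihilating
`h` and lying in the zero locus of a non-degenerate set of `q - 1` linear forms satisfies:
`ord₀(r ∘ φ) = 2a` is even and `(d/dt)^a (d/dt̄)^a (r ∘ φ)(0) ≠ 0`. -/
def QPositive (n q : ℕ) (r : Cn n → ℝ) (x₀ : Cn n) : Prop :=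
  ∃ k : ℕ, DeltaQHyp n q r x₀ < (k : ℝ≥0∞) ∧
  ∃ (N : ℕ) (h : Cn n → ℂ) (f g : Fin N → Cn n → ℂ),
    (∃ p : MvPolynomial (Fin n) ℂ, h = fun z => MvPolynomial.eval z p) ∧
    (∀ j, ∃ p : MvPolynomial (Fin n) ℂ, f j = fun z => MvPolynomial.eval z p) ∧
    (∀ j, ∃ p : MvPolynomial (Fin n) ℂ, g j = fun z => MvPolynomial.eval z p) ∧
    (∀ m : ℕ, m ≤ k → iteratedFDeriv ℝ m r x₀ = iteratedFDeriv ℝ m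
      (fun z => (h z).re + ∑ j, ‖f j z‖ ^ 2 - ∑ j, ‖g j z‖ ^ 2) x₀) ∧
    ∀ φ : ℂ → Cn n, IsCurveGerm n x₀ φ →
      (∀ᶠ t in 𝓝 (0 : ℂ), h (φ t) = 0) →
      (∃ w : Fin (q - 1) → (Cn n →L[ℂ] ℂ), LinearIndependent ℂ w ∧
        ∀ᶠ t in 𝓝 (0 : ℂ), φ t ∈ zeroLocus x₀ w) →
      ∃ a : ℕ, vOrder (fun t => r (φ t)) 0 = ((2 * a : ℕ) : ℕ∞) ∧
        wdt^[a] (wdtbar^[a] (fun t => ((r (φ t) : ℝ) : ℂ))) 0 ≠ 0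


section DWorkMachinery
open Asymptotics
namespace DWork






variable {E F : Type*} [NormedAddCommGroup E] [NormedSpace ℝ E] [NormedAddCommGroup F]
  [NormedSpace ℝ F]

lemma topadd : ((⊤:ℕ∞) : WithTop ℕ∞) + 1 ≤ ((⊤:ℕ∞) : WithTop ℕ∞) := by exact_mod_cast le_top

lemma le_top1 : (1 : WithTop ℕ∞) ≤ ((⊤:ℕ∞) : WithTop ℕ∞) := by norm_cast

lemma le_top2 : (2 : WithTop ℕ∞) ≤ ((⊤:ℕ∞) : WithTop ℕ∞) := by norm_cast

lemma le_topn {k : ℕ} : (k : WithTop ℕ∞) ≤ ((⊤:ℕ∞) : WithTop ℕ∞) := by exact_mod_cast le_top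

/-- directional derivative operator -/
def Dop (a : E) (g : E → F) : E → F := fun x => fderiv ℝ g x a

lemma Dop.contDiff {a : E} {g : E → F} (hg : ContDiff ℝ (⊤:ℕ∞) g) :
    ContDiff ℝ (⊤:ℕ∞) (Dop a g) :=
  (ContinuousLinearMap.apply ℝ F a).contDiff.comp (hg.fderiv_right topadd)

def nestD (l : List E) (g : E → F) : E → F := l.foldr Dop g

lemma nestD_nil (g : E → F) : nestD [] g = g := rfl

lemma nestD_cons (a : E) (l : List E) (g : E → F) : nestD (a :: l) g = Dop a (nestD l g) := rfl

lemma nestD_concat (a : E) (l : List E) (g : E → F) :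
    nestD (l.concat a) g = nestD l (Dop a g) := by
  simp [nestD, List.foldr_concat]

lemma nestD.contDiff (l : List E) {g : E → F} (hg : ContDiff ℝ (⊤:ℕ∞) g) :
    ContDiff ℝ (⊤:ℕ∞) (nestD l g) := by
  induction l with
  | nil => exact hg
  | cons a l ih => exact Dop.contDiff ih

lemma nestD_eq (k : ℕ) {f : E → F} (hf : ContDiff ℝ (⊤:ℕ∞) f) (v : Fin k → E) (x : E) :
    iteratedFDeriv ℝ k f x v = nestD (List.ofFn v) f x := by
  induction k generalizing f with
  | zero => simp [nestD]
  | succ k ih =>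
    rw [iteratedFDeriv_succ_apply_right]
    have h1 : iteratedFDeriv ℝ k (fun y => fderiv ℝ f y) x (Fin.init v) (v (Fin.last k))
        = iteratedFDeriv ℝ k (Dop (v (Fin.last k)) f) x (Fin.init v) := by
      have hc := ContinuousLinearMap.iteratedFDeriv_comp_left
        (ContinuousLinearMap.apply ℝ F (v (Fin.last k))) ((hf.fderiv_right topadd).contDiffAt (x := x))
        (le_topn (k := k))
      have : Dop (v (Fin.last k)) f =
          (ContinuousLinearMap.apply ℝ F (v (Fin.last k))) ∘ (fun y => fderiv ℝ f y) := rfl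
      rw [this, hc]; rfl
    rw [h1, ih (Dop.contDiff hf) (Fin.init v)]
    have h2 : List.ofFn v = (List.ofFn (Fin.init v)).concat (v (Fin.last k)) := by
      rw [List.ofFn_succ']; rfl
    rw [h2, nestD_concat]

lemma Dop_comm {g : E → F} (hg : ContDiff ℝ (⊤:ℕ∞) g) (a b : E) :
    Dop a (Dop b g) = Dop b (Dop a g) := by
  funext x
  have hsym : IsSymmSndFDerivAt ℝ g x :=
    hg.contDiffAt.isSymmSndFDerivAt (by rw [minSmoothness_of_isRCLikeNormedField]; exact le_top2)
  have hd : DifferentiableAt ℝ (fderiv ℝ g) x :=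
    ((hg.fderiv_right topadd).differentiable (by simp)).differentiableAt
  have key : ∀ c d : E, Dop c (Dop d g) x = fderiv ℝ (fderiv ℝ g) x c d := by
    intro c d
    have h1 : fderiv ℝ (fun y => (fderiv ℝ g y) d) x =
        ((fderiv ℝ (fderiv ℝ g) x).flip d) := by
      have := fderiv_clm_apply (c := fderiv ℝ g) (u := fun _ => d) hd (differentiableAt_const d)
      simpa using this
    show fderiv ℝ (fun y => (fderiv ℝ g y) d) x c = _
    rw [h1]; rfl
  rw [key a b, key b a]; exact hsym a b

lemma nestD_perm {l₁ l₂ : List E} (h : l₁.Perm l₂) {g : E → F} (hg : ContDiff ℝ (⊤:ℕ∞) g) :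
    nestD l₁ g = nestD l₂ g := by
  induction h with
  | nil => rfl
  | cons a h ih => rw [nestD_cons, nestD_cons, ih]
  | swap a b l => rw [nestD_cons, nestD_cons, nestD_cons, nestD_cons,
      Dop_comm (nestD.contDiff l hg)]
  | trans h₁ h₂ ih₁ ih₂ => rw [ih₁, ih₂]

lemma iteratedFDeriv_perm {k : ℕ} {f : E → F} (hf : ContDiff ℝ (⊤:ℕ∞) f) (x : E)
    (v : Fin k → E) (σ : Equiv.Perm (Fin k)) :
    iteratedFDeriv ℝ k f x (v ∘ σ) = iteratedFDeriv ℝ k f x v := by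
  rw [nestD_eq k hf _ x, nestD_eq k hf _ x]
  have hperm : (List.ofFn (v ∘ σ)).Perm (List.ofFn v) := by
    rw [List.ofFn_eq_map, List.ofFn_eq_map, ← List.map_map]
    exact (Equiv.Perm.map_finRange_perm σ).map v
  rw [nestD_perm hperm hf]









variable {E : Type*} [NormedAddCommGroup E] [NormedSpace ℝ E]

/-- Polarization: a symmetric continuous multilinear map vanishing on the diagonal is zero. -/
lemma polarization {k : ℕ} (B : ContinuousMultilinearMap ℝ (fun _ : Fin k => E) ℝ)
    (hsym : ∀ (v : Fin k → E) (σ : Equiv.Perm (Fin k)), B (v ∘ σ) = B v)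
    (hdiag : ∀ x : E, B (fun _ => x) = 0) : B = 0 := by
  classical
  have claim : ∀ m : ℕ, m ≤ k → ∀ (c : Fin k → E) (x : E),
      B (fun i => if (i : ℕ) < m then c i else x) = 0 := by
    intro m
    induction m with
    | zero => intro _ c x; simpa using hdiag x
    | succ m ih =>
      intro hm c x
      have hmk : m < k := hm
      set i₀ : Fin k := ⟨m, hmk⟩ with hi₀
      set base : Fin k → E := fun i => if (i : ℕ) < m then c i else x with hbase
      have hg0 : ∀ y : E, B (fun i => if (i : ℕ) < m then c i else y) = 0 :=
        fun y => ih (le_of_lt hm) c y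
      set gfun : Fin k → E → E := fun i y => if (i : ℕ) < m then c i else y with hgfun
      set g' : Fin k → E →L[ℝ] E :=
        fun i => if (i:ℕ) < m then (0 : E →L[ℝ] E) else ContinuousLinearMap.id ℝ E with hg'
      have hcomp : ∀ i, HasFDerivAt (gfun i) (g' i) x := by
        intro i
        by_cases hi : (i:ℕ) < m
        · simp only [hgfun, hg', hi, if_true]; exact hasFDerivAt_const _ _
        · simp only [hgfun, hg', hi, if_false]; exact hasFDerivAt_id _
      have hder := HasFDerivAt.multilinear_comp B hcomp
      have h0 : HasFDerivAt (fun y : E => B (fun i => gfun i y)) (0 : E →L[ℝ] ℝ) x := by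
        have : (fun y : E => B (fun i => gfun i y)) = fun _ => (0:ℝ) := funext hg0
        rw [this]; exact hasFDerivAt_const _ _
      have hsum := h0.unique hder
      have hupdate0 : ∀ w : E, B (Function.update base i₀ w) = 0 := by
        intro w
        have hTw := congrArg (fun T : E →L[ℝ] ℝ => T w) hsum
        simp only [ContinuousLinearMap.zero_apply, ContinuousLinearMap.sum_apply,
          ContinuousLinearMap.comp_apply] at hTw
        have hbasei₀ : base i₀ = x := by simp [hbase, hi₀]
        have hterm : ∀ i : Fin k,
            (B.toContinuousLinearMap (fun j => gfun j x) i) ((g' i) w)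
            = if (i:ℕ) < m then 0 else B (Function.update base i₀ w) := by
          intro i
          have hbase' : (fun j => gfun j x) = base := rfl
          by_cases hi : (i:ℕ) < m
          · simp only [hg', hi, if_true, ContinuousLinearMap.zero_apply, hbase']
            have : (B.toContinuousLinearMap base i) 0 = 0 := map_zero _
            rw [this]
          · simp only [hg', hi, if_false, ContinuousLinearMap.id_apply, hbase']
            have h1 : (B.toContinuousLinearMap base i) w = B (Function.update base i w) := rfl
            rw [h1]
            have htuple : (Function.update base i w) ∘ (Equiv.swap i₀ i)
                = Function.update base i₀ w := by
              funext j
              simp only [Function.comp_apply]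
              rcases eq_or_ne j i₀ with rfl | hj0
              · rw [Equiv.swap_apply_left, Function.update_self, Function.update_self]
              · rw [Function.update_of_ne hj0]
                rcases eq_or_ne j i with rfl | hji
                · rw [Equiv.swap_apply_right, Function.update_of_ne (Ne.symm hj0)]
                  show (if ((i₀:ℕ) < m) then c i₀ else x) = (if ((j:ℕ) < m) then c j else x)
                  rw [if_neg (by simp [hi₀]), if_neg hi]
                · rw [Equiv.swap_apply_of_ne_of_ne hj0 hji, Function.update_of_ne hji]
            rw [← hsym (Function.update base i w) (Equiv.swap i₀ i), htuple]
        rw [Finset.sum_congr rfl (fun i _ => hterm i)] at hTw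
        rw [Finset.sum_ite, Finset.sum_const, Finset.sum_const] at hTw
        simp only [smul_zero, zero_add, nsmul_eq_mul] at hTw
        have hcard : (0:ℝ) <
            ((Finset.univ.filter (fun i : Fin k => ¬ (i:ℕ) < m)).card : ℝ) := by
          have : i₀ ∈ Finset.univ.filter (fun i : Fin k => ¬ (i:ℕ) < m) := by
            simp [hi₀]
          have := Finset.card_pos.2 ⟨i₀, this⟩
          exact_mod_cast this
        rcases mul_eq_zero.1 hTw.symm with h | h
        · exact absurd h (ne_of_gt hcard)
        · exact h
      have hfinal : (fun i : Fin k => if (i : ℕ) < m + 1 then c i else x)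
          = Function.update base i₀ (c i₀) := by
        funext j
        rcases eq_or_ne j i₀ with rfl | hj
        · rw [Function.update_self]; simp [hi₀]
        · rw [Function.update_of_ne hj]
          have hjm : (j:ℕ) ≠ m := fun h => hj (Fin.ext (by simp [hi₀, h]))
          by_cases hjlt : (j:ℕ) < m
          · simp [hbase, hjlt, Nat.lt_succ_of_lt hjlt]
          · have h2 : ¬ (j:ℕ) < m + 1 := by omega
            simp [hbase, hjlt, h2]
      rw [hfinal]; exact hupdate0 _
  ext v
  have hk := claim k le_rfl v (0:E)
  simp only [ContinuousMultilinearMap.zero_apply]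
  rw [← hk]
  congr 1
  funext i
  simp [i.isLt]









lemma topadd' : ((⊤:ℕ∞) : WithTop ℕ∞) + 1 ≤ ((⊤:ℕ∞) : WithTop ℕ∞) := by exact_mod_cast le_top
lemma le_top1' : (1 : WithTop ℕ∞) ≤ ((⊤:ℕ∞) : WithTop ℕ∞) := by norm_cast

variable {E : Type} [NormedAddCommGroup E] [NormedSpace ℝ E]

/-- If the derivatives of a smooth function up to order `m - 1` vanish at `0`,
then `u = O(‖t‖^m)` near `0`. -/
lemma isBigO_pow_of_derivs_zero (m : ℕ) :
    ∀ {F : Type} [NormedAddCommGroup F] [NormedSpace ℝ F] (u : E → F),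
      ContDiff ℝ (⊤:ℕ∞) u → (∀ k, k < m → iteratedFDeriv ℝ k u 0 = 0) →
      u =O[𝓝 (0:E)] (fun t => ‖t‖^m) := by
  induction m with
  | zero =>
    intro F _ _ u hu _
    simp only [pow_zero]
    have hcont : ContinuousAt u 0 := hu.continuous.continuousAt
    have : Tendsto (fun t => ‖u t‖) (𝓝 0) (𝓝 ‖u 0‖) := (hcont.norm : _)
    refine IsBigO.of_bound (‖u 0‖ + 1) ?_
    filter_upwards [this.eventually (eventually_le_nhds (by linarith : ‖u 0‖ < ‖u 0‖ + 1))] with t ht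
    simpa using ht
  | succ m ih =>
    intro F _ _ u hu hz
    have hu0 : u 0 = 0 := by
      have h0 := hz 0 (Nat.succ_pos m)
      have := congrFun (congrArg DFunLike.coe h0) (fun _ => (0:E))
      simpa using this
    have hv : ContDiff ℝ (⊤:ℕ∞) (fderiv ℝ u) := hu.fderiv_right topadd'
    have hvz : ∀ k, k < m → iteratedFDeriv ℝ k (fderiv ℝ u) 0 = 0 := by
      intro k hk
      have hn : ‖iteratedFDeriv ℝ k (fderiv ℝ u) 0‖ = ‖iteratedFDeriv ℝ (k+1) u 0‖ :=
        norm_iteratedFDeriv_fderiv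
      rw [hz (k+1) (by omega), norm_zero] at hn
      exact norm_eq_zero.1 hn
    have hOv := ih (fderiv ℝ u) hv hvz
    rw [isBigO_iff] at hOv
    obtain ⟨C, hC⟩ := hOv
    rw [Metric.eventually_nhds_iff] at hC
    obtain ⟨ε, hε, hball⟩ := hC
    refine IsBigO.of_bound |C| ?_
    rw [Metric.eventually_nhds_iff]
    refine ⟨ε, hε, fun {t} ht => ?_⟩
    have hdist : ‖t‖ < ε := by simpa [dist_eq_norm] using ht
    have hbound : ∀ x ∈ Metric.closedBall (0:E) ‖t‖, ‖fderiv ℝ u x‖ ≤ |C| * ‖t‖^m := by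
      intro x hx
      have hxt : ‖x‖ ≤ ‖t‖ := by simpa [dist_eq_norm] using hx
      have h1 : ‖fderiv ℝ u x‖ ≤ C * ‖(‖x‖^m)‖ := by
        apply hball; simp [dist_eq_norm]; exact lt_of_le_of_lt hxt hdist
      calc ‖fderiv ℝ u x‖ ≤ C * ‖(‖x‖^m)‖ := h1
        _ ≤ |C| * ‖x‖^m := by
            rw [Real.norm_eq_abs, _root_.abs_of_nonneg (pow_nonneg (norm_nonneg x) m)]
            exact mul_le_mul_of_nonneg_right (_root_.le_abs_self C)
              (pow_nonneg (norm_nonneg x) m)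
        _ ≤ |C| * ‖t‖^m := by
            exact mul_le_mul_of_nonneg_left
              (pow_le_pow_left₀ (norm_nonneg x) hxt m) (abs_nonneg C)
    have hmvt := Convex.norm_image_sub_le_of_norm_fderiv_le
      (fun x _ => (hu.differentiable (by simp)).differentiableAt)
      hbound (convex_closedBall (0:E) ‖t‖) (Metric.mem_closedBall_self (norm_nonneg t))
      (by simpa [dist_eq_norm] using le_refl ‖t‖ : t ∈ Metric.closedBall (0:E) ‖t‖)
    rw [hu0, sub_zero, sub_zero] at hmvt
    calc ‖u t‖ ≤ |C| * ‖t‖^m * ‖t‖ := hmvt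
      _ = |C| * ‖t‖^(m+1) := by ring
      _ ≤ |C| * ‖(‖t‖^(m+1))‖ := by
          rw [Real.norm_eq_abs, _root_.abs_of_nonneg (pow_nonneg (norm_nonneg t) _)]







lemma le_topn' {k : ℕ} : (k : WithTop ℕ∞) ≤ ((⊤:ℕ∞) : WithTop ℕ∞) := by exact_mod_cast le_top

lemma iteratedDeriv_constmul {i : ℕ} {f : ℝ → ℝ} (hf : ContDiff ℝ (i:ℕ) f) (a : ℝ) (x : ℝ) :
    iteratedDeriv i (fun s => a * f s) x = a * iteratedDeriv i f x := by
  rw [iteratedDeriv_eq_iteratedFDeriv, iteratedDeriv_eq_iteratedFDeriv]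
  have h1 : (fun s => a * f s) = a • f := by funext s; simp [smul_eq_mul]
  rw [h1, iteratedFDeriv_const_smul_apply hf.contDiffAt]
  simp

lemma iteratedDeriv_monomial (i : ℕ) : ∀ (j : ℕ), i ≤ j →
    iteratedDeriv i (fun s : ℝ => s ^ j) = fun s => (j.descFactorial i : ℝ) * s ^ (j - i) := by
  induction i with
  | zero => intro j _; funext s; simp
  | succ i ih =>
    intro j hij
    match j, hij with
    | (j'+1), hij =>
      rw [iteratedDeriv_succ']
      have hd : deriv (fun s : ℝ => s ^ (j'+1)) = fun s => ((j'+1 : ℕ) : ℝ) * s ^ j' := by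
        funext s; simp [deriv_pow]
      rw [hd]
      funext s
      have hck : ContDiff ℝ (i:ℕ) (fun t : ℝ => t ^ j') := by exact contDiff_id.pow j'
      rw [show iteratedDeriv i (fun u : ℝ => ((j'+1:ℕ):ℝ) * u ^ j') s
          = ((j'+1:ℕ):ℝ) * iteratedDeriv i (fun t : ℝ => t ^ j') s
          from iteratedDeriv_constmul hck _ s, ih j' (by omega)]
      rw [Nat.succ_descFactorial_succ, Nat.succ_sub_succ]
      push_cast
      ring

lemma oneD_zero_iff (i : ℕ) (w : ℝ → ℝ) (x : ℝ) :
    iteratedFDeriv ℝ i w x = 0 ↔ iteratedDeriv i w x = 0 := by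
  constructor
  · intro h; rw [iteratedDeriv_eq_iteratedFDeriv, h]; simp
  · intro h; refine ContinuousMultilinearMap.ext fun m => ?_
    have hm : m = fun j => (m j) • (1:ℝ) := by funext j; simp
    rw [hm, ContinuousMultilinearMap.map_smul_univ, ← iteratedDeriv_eq_iteratedFDeriv, h]
    simp

lemma iteratedDeriv_zero_of_fderiv {i : ℕ} {w : ℝ → ℝ} {x : ℝ}
    (h : iteratedFDeriv ℝ i w x = 0) : iteratedDeriv i w x = 0 :=
  (oneD_zero_iff i w x).1 h

/-- The 1-dimensional key step. -/
lemma oneDim_step (k : ℕ) (g : ℝ → ℝ) (hg : ContDiff ℝ (⊤:ℕ∞) g)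
    (hlow : ∀ i, i < k → iteratedFDeriv ℝ i g 0 = 0)
    (hO : g =O[𝓝 (0:ℝ)] fun s => ‖s‖^(k+1)) : iteratedFDeriv ℝ k g 0 = 0 := by
  set c : ℝ := iteratedDeriv k g 0 with hc
  set a : ℝ := (k.factorial : ℝ)⁻¹ * c with ha
  set p : ℝ → ℝ := fun s => a * s ^ k with hp
  have hpsmooth : ContDiff ℝ (⊤:ℕ∞) p := contDiff_const.mul (contDiff_id.pow k)
  have hpd : ∀ i, i ≤ k → iteratedDeriv i p 0 = if i = k then c else 0 := by
    intro i hik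
    have hck : ContDiff ℝ (i:ℕ) (fun t : ℝ => t ^ k) := by exact contDiff_id.pow k
    rw [hp, show iteratedDeriv i (fun u : ℝ => a * u ^ k) 0
        = a * iteratedDeriv i (fun t : ℝ => t ^ k) 0
        from iteratedDeriv_constmul hck a 0, iteratedDeriv_monomial i k hik]
    rcases eq_or_lt_of_le hik with rfl | hlt
    · simp [Nat.descFactorial_self, ha]
      field_simp
    · have h1 : k - i ≠ 0 := by omega
      have h2 : i ≠ k := by omega
      simp [h2, zero_pow h1]
  set w : ℝ → ℝ := fun s => g s + (-(p s)) with hw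
  have hwsmooth : ContDiff ℝ (⊤:ℕ∞) w := hg.add hpsmooth.neg
  have hwd : ∀ i, i < k + 1 → iteratedFDeriv ℝ i w 0 = 0 := by
    intro i hik
    rw [oneD_zero_iff]
    have hadd : iteratedDeriv i w 0 = iteratedDeriv i g 0 + iteratedDeriv i (fun s => -(p s)) 0 := by
      rw [iteratedDeriv_eq_iteratedFDeriv, iteratedDeriv_eq_iteratedFDeriv,
        iteratedDeriv_eq_iteratedFDeriv]
      rw [show w = g + (fun s => -(p s)) from rfl]
      rw [iteratedFDeriv_add_apply (hg.of_le le_topn').contDiffAt (hpsmooth.neg.of_le le_topn').contDiffAt]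
      simp
    have hneg : iteratedDeriv i (fun s => -(p s)) 0 = - iteratedDeriv i p 0 := by
      rw [iteratedDeriv_eq_iteratedFDeriv, iteratedDeriv_eq_iteratedFDeriv]
      rw [show (fun s => -(p s)) = -p from rfl, iteratedFDeriv_neg_apply]
      simp
    rw [hadd, hneg]
    rcases Nat.lt_or_ge i k with hi | hi
    · rw [iteratedDeriv_zero_of_fderiv (hlow i hi), hpd i (le_of_lt hi)]
      simp [Nat.ne_of_lt hi]
    · have hik' : i = k := by omega
      subst hik'
      rw [hpd i le_rfl, if_pos rfl, ← hc]
      ring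
  have hOw : w =O[𝓝 (0:ℝ)] fun s => ‖s‖^(k+1) :=
    isBigO_pow_of_derivs_zero (k+1) w hwsmooth hwd
  have hOp : p =O[𝓝 (0:ℝ)] fun s => ‖s‖^(k+1) := by
    have : p = fun s => g s - w s := by funext s; rw [hw]; ring
    rw [this]
    exact hO.sub hOw
  have ha0 : a = 0 := by
    by_contra hane
    have hlo : (fun s : ℝ => ‖s‖^(k+1)) =o[𝓝 (0:ℝ)] fun s => s^k := by
      have h1 : (fun s : ℝ => s^(k+1)) =o[𝓝 (0:ℝ)] fun s => s^k :=
        isLittleO_pow_pow (by omega)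
      have h2 := h1.norm_left
      refine h2.congr_left ?_
      intro s; rw [norm_pow]
    have hplo : p =o[𝓝 (0:ℝ)] fun s => s^k := hOp.trans_isLittleO hlo
    have hself : (fun s : ℝ => s^k) =O[𝓝 (0:ℝ)] p := by
      refine IsBigO.of_bound |a⁻¹| ?_
      filter_upwards with s
      show ‖s ^ k‖ ≤ |a⁻¹| * ‖a * s ^ k‖
      rw [Real.norm_eq_abs, Real.norm_eq_abs, _root_.abs_mul]
      rw [← mul_assoc, _root_.abs_inv]
      have : |a| ≠ 0 := by simpa using hane
      field_simp
      exact le_rfl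
    have hcontr : (fun s : ℝ => s^k) =o[𝓝 (0:ℝ)] fun s => s^k := hself.trans_isLittleO hplo
    have hfreq : ∃ᶠ s in 𝓝 (0:ℝ), s^k ≠ 0 := by
      have h1 : ∀ᶠ s in 𝓝[≠] (0:ℝ), s^k ≠ 0 := by
        filter_upwards [self_mem_nhdsWithin] with s hs
        exact pow_ne_zero k hs
      exact (h1.frequently).filter_mono nhdsWithin_le_nhds
    exact isLittleO_irrefl hfreq hcontr
  have hc0 : c = 0 := by
    have : ((k.factorial : ℝ))⁻¹ ≠ 0 := by
      simp [Nat.factorial_ne_zero]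
    rcases mul_eq_zero.1 (ha ▸ ha0) with h | h
    · exact absurd h this
    · exact h
  rw [oneD_zero_iff]
  exact hc0




end DWork

namespace DWork

variable {E : Type} [NormedAddCommGroup E] [NormedSpace ℝ E]

lemma derivs_zero_of_isBigO (m : ℕ) (u : E → ℝ) (hu : ContDiff ℝ (⊤:ℕ∞) u)
    (hO : u =O[𝓝 (0:E)] fun t => ‖t‖^m) : ∀ k, k < m → iteratedFDeriv ℝ k u 0 = 0 := by
  intro k
  induction k using Nat.strong_induction_on with
  | _ k ihk =>
    intro hk
    have hlow : ∀ i, i < k → iteratedFDeriv ℝ i u 0 = 0 := fun i hi => ihk i hi (by omega)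
    have hsym : ∀ (v : Fin k → E) (σ : Equiv.Perm (Fin k)),
        iteratedFDeriv ℝ k u 0 (v ∘ σ) = iteratedFDeriv ℝ k u 0 v :=
      fun v σ => iteratedFDeriv_perm hu 0 v σ
    have hdiag : ∀ t₀ : E, iteratedFDeriv ℝ k u 0 (fun _ => t₀) = 0 := by
      intro t₀
      set L : ℝ →L[ℝ] E := ContinuousLinearMap.toSpanSingleton ℝ t₀ with hL
      set g : ℝ → ℝ := u ∘ L with hg
      have hgs : ContDiff ℝ (⊤:ℕ∞) g := hu.comp L.contDiff
      have hcomp : ∀ i : ℕ, iteratedFDeriv ℝ i g 0 =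
          (iteratedFDeriv ℝ i u 0).compContinuousLinearMap (fun _ => L) := by
        intro i
        have h := L.iteratedFDeriv_comp_right hu (0:ℝ) (le_topn (k := i))
        rw [map_zero] at h
        exact h
      have hglow : ∀ i, i < k → iteratedFDeriv ℝ i g 0 = 0 := by
        intro i hi
        rw [hcomp i, hlow i hi]
        ext m'
        simp
      have hgO : g =O[𝓝 (0:ℝ)] fun s => ‖s‖^(k+1) := by
        have h1 : u =O[𝓝 (0:E)] fun t => ‖t‖^(k+1) := by
          refine hO.trans (Asymptotics.IsBigO.of_bound 1 ?_)
          filter_upwards [Metric.closedBall_mem_nhds (0:E) one_pos] with t ht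
          have ht1 : ‖t‖ ≤ 1 := by simpa [dist_eq_norm] using ht
          rw [one_mul, Real.norm_eq_abs, Real.norm_eq_abs,
            _root_.abs_of_nonneg (pow_nonneg (norm_nonneg t) _),
            _root_.abs_of_nonneg (pow_nonneg (norm_nonneg t) _)]
          exact pow_le_pow_of_le_one (norm_nonneg t) ht1 (by omega)
        have h2 : Filter.Tendsto L (𝓝 (0:ℝ)) (𝓝 (0:E)) := by
          have := L.continuous.tendsto (0:ℝ)
          rwa [map_zero] at this
        have h3 := h1.comp_tendsto h2
        refine h3.trans (Asymptotics.IsBigO.of_bound (‖t₀‖^(k+1)) ?_)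
        filter_upwards with s
        show ‖‖L s‖^(k+1)‖ ≤ ‖t₀‖^(k+1) * ‖‖s‖^(k+1)‖
        rw [Real.norm_eq_abs, Real.norm_eq_abs,
          _root_.abs_of_nonneg (pow_nonneg (norm_nonneg _) _),
          _root_.abs_of_nonneg (pow_nonneg (norm_nonneg _) _)]
        have hLs : ‖L s‖ = |s| * ‖t₀‖ := by
          rw [hL, ContinuousLinearMap.toSpanSingleton_apply, norm_smul, Real.norm_eq_abs]
        rw [hLs, mul_pow, Real.norm_eq_abs s]
        ring_nf
        exact le_refl _
      have hg0 := oneDim_step k g hgs hglow hgO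
      have heval := congrFun (congrArg DFunLike.coe (hcomp k)) (fun _ : Fin k => (1:ℝ))
      rw [hg0] at heval
      have : (iteratedFDeriv ℝ k u 0).compContinuousLinearMap (fun _ => L)
          (fun _ : Fin k => (1:ℝ)) = iteratedFDeriv ℝ k u 0 (fun _ => t₀) := by
        rw [ContinuousMultilinearMap.compContinuousLinearMap_apply]
        congr 1
        funext j
        rw [hL, ContinuousLinearMap.toSpanSingleton_apply, one_smul]
      rw [this] at heval
      simpa using heval.symm
    have := polarization (iteratedFDeriv ℝ k u 0) hsym hdiag
    exact this

variable {F : Type*} [NormedAddCommGroup F] [NormedSpace ℝ F]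

lemma iteratedFDeriv_congr_nhds {u u' : E → F} {x : E} (h : u =ᶠ[𝓝 x] u') (n : ℕ) :
    iteratedFDeriv ℝ n u x = iteratedFDeriv ℝ n u' x := by
  rw [← iteratedFDerivWithin_univ, ← iteratedFDerivWithin_univ]
  exact Filter.EventuallyEq.iteratedFDerivWithin_eq (by simpa [nhdsWithin_univ] using h)
    (h.eq_of_nhds) n

lemma vOrder_congr {u u' : E → F} {x : E} (h : u =ᶠ[𝓝 x] u') :
    vOrder u x = vOrder u' x := by
  unfold vOrder
  exact iInf_congr fun m => by rw [iteratedFDeriv_congr_nhds h m]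

lemma le_vOrder_iff (u : E → F) (x : E) (k : ℕ∞) :
    k ≤ vOrder u x ↔ ∀ m : ℕ, (m:ℕ∞) < k → iteratedFDeriv ℝ m u x = 0 := by
  unfold vOrder
  rw [le_iInf_iff]
  constructor
  · intro h m hm
    by_contra hne
    have h2 := h m
    rw [iInf_pos hne] at h2
    exact absurd h2 (not_le.2 hm)
  · intro h m
    rcases eq_or_ne (iteratedFDeriv ℝ m u x) 0 with h0 | h0
    · rw [iInf_neg (fun hc => hc h0)]
      exact le_top
    · rw [iInf_pos h0]
      by_contra hlt
      exact h0 (h m (not_le.1 hlt))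

lemma vOrder_le_of_isBigO {u v : E → ℝ} (hu : ContDiff ℝ (⊤:ℕ∞) u) (hv : ContDiff ℝ (⊤:ℕ∞) v)
    (hO : u =O[𝓝 (0:E)] v) : vOrder v 0 ≤ vOrder u 0 := by
  rw [le_vOrder_iff]
  intro m hm
  have hvz : ∀ j, j < m+1 → iteratedFDeriv ℝ j v 0 = 0 := by
    intro j hj
    refine (le_vOrder_iff v 0 (vOrder v 0)).1 le_rfl j (lt_of_le_of_lt ?_ hm)
    exact_mod_cast (by omega : j ≤ m)
  have hvO := isBigO_pow_of_derivs_zero (m+1) v hv hvz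
  exact derivs_zero_of_isBigO (m+1) u hu (hO.trans hvO) m (by omega)

lemma vOrder_eq_of_isBigO {u v : E → ℝ} (hu : ContDiff ℝ (⊤:ℕ∞) u) (hv : ContDiff ℝ (⊤:ℕ∞) v)
    (h1 : u =O[𝓝 (0:E)] v) (h2 : v =O[𝓝 (0:E)] u) : vOrder u 0 = vOrder v 0 :=
  le_antisymm (vOrder_le_of_isBigO hv hu h2) (vOrder_le_of_isBigO hu hv h1)

end DWork

namespace DWork

variable {X : Type} [NormedAddCommGroup X] [NormedSpace ℝ X]

/-- Near a point of `{r = 0}` with non-vanishing gradient, any other function `r'`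
vanishing on `{r = 0}` is dominated by `|r|`. -/
lemma defining_compare (r r' : X → ℝ) (x₀ : X)
    (hr : Differentiable ℝ r) (hr' : Differentiable ℝ r')
    (hrf : Continuous (fun z => fderiv ℝ r z)) (hr'f : Continuous (fun z => fderiv ℝ r' z))
    (hzero : ∀ z, r z = 0 → r' z = 0)
    (hgrad0 : fderiv ℝ r x₀ ≠ 0) (hx₀ : r x₀ = 0) :
    ∃ C > 0, ∀ᶠ z in 𝓝 x₀, |r' z| ≤ C * |r z| := by
  obtain ⟨y, hy⟩ : ∃ y, fderiv ℝ r x₀ y ≠ 0 := by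
    by_contra h
    push_neg at h
    exact hgrad0 (ContinuousLinearMap.ext fun y => by simpa using h y)
  set e : X := (fderiv ℝ r x₀ y)⁻¹ • y with he_def
  have he : fderiv ℝ r x₀ e = 1 := by
    rw [he_def, map_smul, smul_eq_mul, inv_mul_cancel₀ hy]
  have he0 : e ≠ 0 := by
    intro h
    rw [h, map_zero] at he
    exact one_ne_zero he.symm
  have hepos : 0 < ‖e‖ := norm_pos_iff.2 he0
  set M : ℝ := ‖fderiv ℝ r' x₀‖ + 1 with hM
  have hMpos : 0 < M := by positivity
  have hecont : Continuous fun z => fderiv ℝ r z e :=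
    (ContinuousLinearMap.apply ℝ ℝ e).continuous.comp hrf
  have ev1 : ∀ᶠ z in 𝓝 x₀, 1/2 ≤ fderiv ℝ r z e := by
    have h1 : Filter.Tendsto (fun z => fderiv ℝ r z e) (𝓝 x₀) (𝓝 (fderiv ℝ r x₀ e)) :=
      hecont.continuousAt
    rw [he] at h1
    exact h1.eventually (eventually_ge_nhds (by norm_num))
  have ev2 : ∀ᶠ z in 𝓝 x₀, ‖fderiv ℝ r' z‖ ≤ M := by
    have h1 : Filter.Tendsto (fun z => ‖fderiv ℝ r' z‖) (𝓝 x₀) (𝓝 ‖fderiv ℝ r' x₀‖) :=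
      (hr'f.norm).continuousAt
    exact h1.eventually (eventually_le_nhds (by rw [hM]; linarith))
  obtain ⟨ρ₀, hρ₀, hball₀⟩ := Metric.eventually_nhds_iff.1 (ev1.and ev2)
  set ρ : ℝ := ρ₀ / 2 with hρ_def
  have hρ : 0 < ρ := by positivity
  have hball : ∀ z ∈ Metric.closedBall x₀ ρ,
      1/2 ≤ fderiv ℝ r z e ∧ ‖fderiv ℝ r' z‖ ≤ M := by
    intro z hz
    refine hball₀ ?_
    have : dist z x₀ ≤ ρ := by simpa [Metric.mem_closedBall] using hz
    linarith
  set σ : ℝ := ρ / (2 * ‖e‖) with hσ_def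
  have hσ : 0 < σ := by positivity
  have hσe : σ * ‖e‖ = ρ / 2 := by
    rw [hσ_def]; field_simp
  have ev3 : ∀ᶠ z in 𝓝 x₀, |r z| < σ/4 := by
    have h1 : Filter.Tendsto r (𝓝 x₀) (𝓝 (r x₀)) := hr.continuous.continuousAt
    rw [hx₀] at h1
    have h2 : ∀ᶠ w in 𝓝 (0:ℝ), |w| < σ/4 := by
      have : Metric.ball (0:ℝ) (σ/4) ∈ 𝓝 (0:ℝ) := Metric.ball_mem_nhds _ (by positivity)
      filter_upwards [this] with w hw
      simpa [Real.dist_eq] using hw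
    exact h1.eventually h2
  obtain ⟨δ₂, hδ₂, hballr⟩ := Metric.eventually_nhds_iff.1 ev3
  set δ : ℝ := min (ρ/2) δ₂ with hδ_def
  have hδ : 0 < δ := lt_min (by positivity) hδ₂
  refine ⟨2 * M * ‖e‖, by positivity, ?_⟩
  rw [Metric.eventually_nhds_iff]
  refine ⟨δ, hδ, fun {z} hz => ?_⟩
  have hz1 : dist z x₀ < ρ/2 := lt_of_lt_of_le hz (min_le_left _ _)
  have hz2 : |r z| < σ/4 := hballr (lt_of_lt_of_le hz (min_le_right _ _))
  have hzball : z ∈ Metric.closedBall x₀ ρ := by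
    rw [Metric.mem_closedBall]; linarith
  set h : ℝ → ℝ := fun s => r (z + s • e) with hh_def
  have hmem : ∀ s ∈ Set.Icc (-σ) σ, z + s • e ∈ Metric.closedBall x₀ ρ := by
    intro s hs
    rw [Metric.mem_closedBall]
    have h1 : dist (z + s • e) x₀ ≤ ‖s • e‖ + dist z x₀ := by
      calc dist (z + s • e) x₀ ≤ dist (z + s • e) z + dist z x₀ := dist_triangle _ _ _
        _ = ‖s • e‖ + dist z x₀ := by rw [dist_eq_norm]; simp
    have h2 : ‖s • e‖ ≤ σ * ‖e‖ := by
      rw [norm_smul, Real.norm_eq_abs]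
      have : |s| ≤ σ := _root_.abs_le.2 ⟨hs.1, hs.2⟩
      exact mul_le_mul_of_nonneg_right this (norm_nonneg e)
    rw [hσe] at h2
    linarith
  have hline : ∀ s : ℝ, HasDerivAt (fun t : ℝ => z + t • e) e s := by
    intro s
    simpa using ((hasDerivAt_id s).smul_const e).const_add z
  have hh : ∀ s : ℝ, HasDerivAt h (fderiv ℝ r (z + s • e) e) s := by
    intro s
    exact ((hr _).hasFDerivAt).comp_hasDerivAt s (hline s)
  set h₂ : ℝ → ℝ := fun s => h s - s/2 with hh₂_def
  have hh₂ : ∀ s : ℝ, HasDerivAt h₂ (fderiv ℝ r (z + s • e) e - 1/2) s := by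
    intro s
    exact (hh s).sub ((hasDerivAt_id s).div_const 2)
  have hmono : MonotoneOn h₂ (Set.Icc (-σ) σ) := by
    apply monotoneOn_of_deriv_nonneg (convex_Icc _ _)
    · exact fun s _ => (hh₂ s).continuousAt.continuousWithinAt
    · intro s hs
      exact ((hh₂ s).differentiableAt).differentiableWithinAt
    · intro s hs
      rw [interior_Icc] at hs
      rw [(hh₂ s).deriv]
      have := (hball _ (hmem s (Set.mem_Icc_of_Ioo hs))).1
      linarith
  have hh0 : h 0 = r z := by rw [hh_def]; simp
  have hendpos : 0 < h σ := by
    have h1 : h₂ 0 ≤ h₂ σ := hmono (by constructor <;> [linarith; linarith])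
      (by constructor <;> [linarith; linarith]) (le_of_lt hσ)
    have h2 : h₂ 0 = r z := by rw [hh₂_def]; simpa using hh0
    have h3 : h₂ σ = h σ - σ/2 := rfl
    have h4 : - (σ/4) < r z := by have := _root_.abs_lt.1 hz2; linarith [this.1]
    rw [h2, h3] at h1
    linarith
  have hendneg : h (-σ) < 0 := by
    have h1 : h₂ (-σ) ≤ h₂ 0 := hmono (by constructor <;> [linarith; linarith])
      (by constructor <;> [linarith; linarith]) (by linarith)
    have h2 : h₂ 0 = r z := by rw [hh₂_def]; simpa using hh0
    have h3 : h₂ (-σ) = h (-σ) + σ/2 := by rw [hh₂_def]; ring_nf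
    have h4 : r z < σ/4 := by have := _root_.abs_lt.1 hz2; linarith [this.2]
    rw [h2, h3] at h1
    linarith
  have hcont : ContinuousOn h (Set.Icc (-σ) σ) :=
    fun s _ => (hh s).continuousAt.continuousWithinAt
  have hIVT := intermediate_value_Icc (by linarith : -σ ≤ σ) hcont
  have h0mem : (0:ℝ) ∈ Set.Icc (h (-σ)) (h σ) := ⟨le_of_lt hendneg, le_of_lt hendpos⟩
  obtain ⟨s₁, hs₁mem, hs₁⟩ := hIVT h0mem
  have hs₁bound : |s₁| ≤ 2 * |r z| := by
    rcases le_or_gt 0 s₁ with hpos | hneg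
    · have h1 : h₂ 0 ≤ h₂ s₁ := hmono (by constructor <;> [linarith; linarith]) hs₁mem hpos
      have h2 : h₂ 0 = r z := by rw [hh₂_def]; simpa using hh0
      have h3 : h₂ s₁ = - s₁/2 := by show h s₁ - s₁/2 = - s₁/2; rw [hs₁]; ring
      rw [h2, h3] at h1
      rw [_root_.abs_of_nonneg hpos]
      have : - r z ≤ |r z| := _root_.neg_le_abs _
      linarith
    · have h1 : h₂ s₁ ≤ h₂ 0 := hmono hs₁mem (by constructor <;> [linarith; linarith])
        (le_of_lt hneg)
      have h2 : h₂ 0 = r z := by rw [hh₂_def]; simpa using hh0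
      have h3 : h₂ s₁ = - s₁/2 := by show h s₁ - s₁/2 = - s₁/2; rw [hs₁]; ring
      rw [h2, h3] at h1
      rw [_root_.abs_of_neg hneg]
      have : r z ≤ |r z| := _root_.le_abs_self _
      linarith
  set w : X := z + s₁ • e with hw_def
  have hwzero : r' w = 0 := hzero w hs₁
  have hwball : w ∈ Metric.closedBall x₀ ρ := hmem s₁ hs₁mem
  have hmvt := Convex.norm_image_sub_le_of_norm_fderiv_le
    (fun x _ => hr' x)
    (fun x hx => (hball x hx).2) (convex_closedBall x₀ ρ) hwball hzball
  rw [hwzero, sub_zero] at hmvt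
  have hzw : ‖z - w‖ = |s₁| * ‖e‖ := by
    rw [hw_def]
    have : z - (z + s₁ • e) = -(s₁ • e) := by abel
    rw [this, norm_neg, norm_smul, Real.norm_eq_abs]
  calc |r' z| = ‖r' z‖ := (Real.norm_eq_abs _).symm
    _ ≤ M * ‖z - w‖ := hmvt
    _ = M * (|s₁| * ‖e‖) := by rw [hzw]
    _ ≤ M * ((2 * |r z|) * ‖e‖) := by
        apply mul_le_mul_of_nonneg_left _ (le_of_lt hMpos)
        exact mul_le_mul_of_nonneg_right hs₁bound (norm_nonneg e)
    _ = 2 * M * ‖e‖ * |r z| := by ring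

end DWork

open Asymptotics in
/-- The vanishing order of `r ∘ φ` along an analytic curve through `x₀` is unchanged when `r`
is replaced by a comparable function. -/
lemma DWork.curve_comp_vOrder {n : ℕ} (r r' : Cn n → ℝ) (x₀ : Cn n)
    (hr : ContDiff ℝ (⊤ : ℕ∞) r) (hr' : ContDiff ℝ (⊤ : ℕ∞) r')
    (hc1 : ∃ C > 0, ∀ᶠ z in 𝓝 x₀, |r' z| ≤ C * |r z|)
    (hc2 : ∃ C > 0, ∀ᶠ z in 𝓝 x₀, |r z| ≤ C * |r' z|)
    (φ : ℂ → Cn n) (hφ : AnalyticAt ℂ φ 0) (hφ0 : φ 0 = x₀) :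
    vOrder (fun t => r (φ t)) 0 = vOrder (fun t => r' (φ t)) 0 := by
  have hφℝ : AnalyticAt ℝ φ 0 := hφ.restrictScalars
  obtain ⟨ρ, hρ, hφan⟩ : ∃ ρ > 0, AnalyticOnNhd ℝ φ (Metric.ball 0 ρ) := by
    obtain ⟨ρ, hρ, hb⟩ := Metric.eventually_nhds_iff.1 hφℝ.eventually_analyticAt
    exact ⟨ρ, hρ, fun y hy => hb (by simpa [Metric.mem_ball] using hy)⟩
  have hφsm : ContDiffOn ℝ (⊤:ℕ∞) φ (Metric.ball 0 ρ) :=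
    hφan.contDiffOn Metric.isOpen_ball.uniqueDiffOn
  set χ : ContDiffBump (0:ℂ) := ⟨ρ/3, ρ/2, by positivity, by linarith⟩ with hχ
  set ψ : ℂ → Cn n := fun t => x₀ + χ t • (φ t - x₀) with hψ_def
  have hψsm : ContDiff ℝ (⊤:ℕ∞) ψ := by
    rw [contDiff_iff_contDiffAt]
    intro t
    by_cases ht : t ∈ Metric.ball (0:ℂ) ρ
    · have h1 : ContDiffAt ℝ (⊤:ℕ∞) φ t := hφsm.contDiffAt (Metric.isOpen_ball.mem_nhds ht)
      exact contDiffAt_const.add ((χ.contDiffAt).smul (h1.sub contDiffAt_const))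
    · have ht' : t ∉ Metric.closedBall (0:ℂ) (ρ/2) := by
        intro hmem
        apply ht
        have h1 : ‖t‖ ≤ ρ/2 := by simpa [Metric.mem_closedBall, dist_eq_norm] using hmem
        have : ‖t‖ < ρ := by linarith
        simpa [Metric.mem_ball, dist_eq_norm] using this
      have hopen : IsOpen (Metric.closedBall (0:ℂ) (ρ/2))ᶜ :=
        Metric.isClosed_closedBall.isOpen_compl
      have hev : ψ =ᶠ[𝓝 t] fun _ => x₀ := by
        filter_upwards [hopen.mem_nhds ht'] with y hy
        have hy0 : χ y = 0 := by
          have hns : y ∉ Function.support χ := by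
            rw [χ.support_eq]
            intro hmem
            apply hy
            have : dist y 0 < ρ/2 := by simpa [Metric.mem_ball] using hmem
            simpa [Metric.mem_closedBall] using le_of_lt this
          simpa [Function.mem_support, not_not] using hns
        simp [hψ_def, hy0]
      exact contDiffAt_const.congr_of_eventuallyEq hev
  have hψeq : ψ =ᶠ[𝓝 (0:ℂ)] φ := by
    filter_upwards [Metric.closedBall_mem_nhds (0:ℂ) (by positivity : 0 < ρ/3)] with t ht
    have h1 : χ t = 1 := χ.one_of_mem_closedBall ht
    simp [hψ_def, h1]
  have hψ0 : ψ 0 = x₀ := by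
    rw [hψeq.eq_of_nhds, hφ0]
  have hu : ContDiff ℝ (⊤:ℕ∞) (fun t => r (ψ t)) := (hr.of_le (by simp)).comp hψsm
  have hu' : ContDiff ℝ (⊤:ℕ∞) (fun t => r' (ψ t)) := (hr'.of_le (by simp)).comp hψsm
  have htend : Filter.Tendsto ψ (𝓝 0) (𝓝 x₀) := by
    have h1 : Filter.Tendsto ψ (𝓝 0) (𝓝 (ψ 0)) := hψsm.continuous.continuousAt
    rwa [hψ0] at h1
  have hO1 : (fun t => r' (ψ t)) =O[𝓝 (0:ℂ)] (fun t => r (ψ t)) := by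
    obtain ⟨C, hCpos, hCev⟩ := hc1
    refine IsBigO.of_bound C ?_
    filter_upwards [htend.eventually hCev] with t ht
    simpa [Real.norm_eq_abs] using ht
  have hO2 : (fun t => r (ψ t)) =O[𝓝 (0:ℂ)] (fun t => r' (ψ t)) := by
    obtain ⟨C, hCpos, hCev⟩ := hc2
    refine IsBigO.of_bound C ?_
    filter_upwards [htend.eventually hCev] with t ht
    simpa [Real.norm_eq_abs] using ht
  have e1 : vOrder (fun t => r (φ t)) 0 = vOrder (fun t => r (ψ t)) 0 :=
    DWork.vOrder_congr ((hψeq.fun_comp r).symm)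
  have e2 : vOrder (fun t => r' (φ t)) 0 = vOrder (fun t => r' (ψ t)) 0 :=
    DWork.vOrder_congr ((hψeq.fun_comp r').symm)
  rw [e1, e2]
  exact DWork.vOrder_eq_of_isBigO hu hu' hO2 hO1

end DWorkMachinery

/-- the D'Angelo `q`-type is well-defined. -/
theorem statement_1 (n q : ℕ) (hq1 : 1 ≤ q) (hq2 : q < n)
    (r r' : Cn n → ℝ) (x₀ : Cn n)
    (hr : ContDiff ℝ (⊤ : ℕ∞) r) (hr' : ContDiff ℝ (⊤ : ℕ∞) r')
    (hzero : {z | r z = 0} = {z | r' z = 0})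
    (hgrad : ∀ z, r z = 0 → fderiv ℝ r z ≠ 0)
    (hgrad' : ∀ z, r' z = 0 → fderiv ℝ r' z ≠ 0)
    (hx₀ : r x₀ = 0) :
    DeltaQHyp n q r x₀ = DeltaQHyp n q r' x₀ := by
  have hx₀' : r' x₀ = 0 := (Set.ext_iff.1 hzero x₀).1 hx₀
  have hc1 : ∃ C > 0, ∀ᶠ z in 𝓝 x₀, |r' z| ≤ C * |r z| :=
    DWork.defining_compare r r' x₀ (hr.differentiable (by simp)) (hr'.differentiable (by simp))
      (hr.continuous_fderiv (by simp)) (hr'.continuous_fderiv (by simp))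
      (fun z hz => (Set.ext_iff.1 hzero z).1 hz) (hgrad x₀ hx₀) hx₀
  have hc2 : ∃ C > 0, ∀ᶠ z in 𝓝 x₀, |r z| ≤ C * |r' z| :=
    DWork.defining_compare r' r x₀ (hr'.differentiable (by simp)) (hr.differentiable (by simp))
      (hr'.continuous_fderiv (by simp)) (hr.continuous_fderiv (by simp))
      (fun z hz => (Set.ext_iff.1 hzero z).2 hz) (hgrad' x₀ hx₀') hx₀'
  have key : ∀ φ : ℂ → Cn n, IsCurveGerm n x₀ φ →
      vOrder (fun t => r (φ t)) 0 = vOrder (fun t => r' (φ t)) 0 :=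
    fun φ hφ => DWork.curve_comp_vOrder r r' x₀ hr hr' hc1 hc2 φ hφ.analyticAt hφ.init
  unfold DeltaQHyp Delta1On
  refine iInf_congr fun w => iInf_congr fun hw => ?_
  refine iSup_congr fun φ => iSup_congr fun hφ => iSup_congr fun hZ => ?_
  rw [key φ hφ]

end
end

section
/- Let M be a smooth real hypersurface in ℂⁿ with defining function r, x₀ ∈ M, 1 ≤ q < n, and suppose t = Δ_q(M,x₀) < ∞. Let k = ⌈t⌉, the least integer greater than or equal to t. Then for every smooth real hypersurface M′ through x₀ whose defining function r′ has the same k-jet at x₀ as r, one has Δ_q(M′,x₀) = Δ_q(M,x₀). That is, Δ_q is finitely determined. -/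
open Filter Topology Complex
open scoped ENNReal

set_option synthInstance.maxHeartbeats 1000000
set_option maxHeartbeats 1000000

noncomputable section

/-! ### Auxiliary lemmas for `statement_3` -/

section Statement3Aux

open scoped ContDiff

lemma vOrder_le' {E F : Type*} [NormedAddCommGroup E] [NormedSpace ℝ E]
    [NormedAddCommGroup F] [NormedSpace ℝ F] {u : E → F} {x : E} {m : ℕ}
    (h : iteratedFDeriv ℝ m u x ≠ 0) : vOrder u x ≤ m :=
  iInf₂_le m h

lemma le_vOrder' {E F : Type*} [NormedAddCommGroup E] [NormedSpace ℝ E]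
    [NormedAddCommGroup F] [NormedSpace ℝ F] {u : E → F} {x : E} {m : ℕ}
    (h : ∀ j < m, iteratedFDeriv ℝ j u x = 0) : (m : ℕ∞) ≤ vOrder u x := by
  refine le_iInf₂ fun j hj => ?_
  by_contra hlt
  push_neg at hlt
  exact hj (h j (by exact_mod_cast hlt))

lemma vOrder_eq_iff' {E F : Type*} [NormedAddCommGroup E] [NormedSpace ℝ E]
    [NormedAddCommGroup F] [NormedSpace ℝ F] {u : E → F} {x : E} {m : ℕ} :
    vOrder u x = m ↔ (iteratedFDeriv ℝ m u x ≠ 0 ∧ ∀ j < m, iteratedFDeriv ℝ j u x = 0) := by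
  constructor
  · intro h
    have hzero : ∀ j < m, iteratedFDeriv ℝ j u x = 0 := by
      intro j hj
      by_contra hne
      have := vOrder_le' hne
      rw [h] at this
      exact absurd (by exact_mod_cast this) (not_le.mpr hj)
    refine ⟨?_, hzero⟩
    intro hm
    have : ((m+1 : ℕ) : ℕ∞) ≤ vOrder u x := by
      refine le_vOrder' fun j hj => ?_
      rcases Nat.lt_succ_iff_lt_or_eq.mp hj with h' | rfl
      · exact hzero j h'
      · exact hm
    rw [h] at this
    exact absurd (by exact_mod_cast this) (by omega)
  · rintro ⟨hm, hzero⟩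
    exact le_antisymm (vOrder_le' hm) (le_vOrder' hzero)

lemma vOrder_eq_top_iff' {E F : Type*} [NormedAddCommGroup E] [NormedSpace ℝ E]
    [NormedAddCommGroup F] [NormedSpace ℝ F] {u : E → F} {x : E} :
    vOrder u x = ⊤ ↔ ∀ m : ℕ, iteratedFDeriv ℝ m u x = 0 := by
  constructor
  · intro h m
    by_contra hne
    have := vOrder_le' hne
    rw [h] at this
    exact absurd this (by simp)
  · intro h
    simp only [vOrder]
    rw [iInf_eq_top]
    intro m
    rw [iInf_eq_top]
    intro hm
    exact absurd (h m) hm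

lemma vOrder_congr_of_lt' {E F : Type*} [NormedAddCommGroup E] [NormedSpace ℝ E]
    [NormedAddCommGroup F] [NormedSpace ℝ F] {u v : E → F} {x : E} {N : ℕ∞}
    (hagree : ∀ j : ℕ, (j : ℕ∞) < N → iteratedFDeriv ℝ j u x = iteratedFDeriv ℝ j v x)
    (hlt : vOrder u x < N) : vOrder v x = vOrder u x := by
  obtain ⟨m, hm⟩ : ∃ m : ℕ, vOrder u x = m := by
    have : vOrder u x ≠ ⊤ := fun h => by simp [h] at hlt
    exact Option.ne_none_iff_exists'.mp this
  rw [hm]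
  rw [hm] at hlt
  rw [vOrder_eq_iff'] at hm ⊢
  obtain ⟨h1, h2⟩ := hm
  constructor
  · rw [← hagree m hlt]; exact h1
  · intro j hj
    rw [← hagree j (lt_trans (by exact_mod_cast hj) hlt)]
    exact h2 j hj

lemma one_le_vOrder' {E F : Type*} [NormedAddCommGroup E] [NormedSpace ℝ E]
    [NormedAddCommGroup F] [NormedSpace ℝ F] {u : E → F} {x : E} (h : u x = 0) :
    1 ≤ vOrder u x := by
  have : ((1:ℕ) : ℕ∞) ≤ vOrder u x := by
    refine le_vOrder' fun j hj => ?_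
    interval_cases j
    ·  ext v
       simp [iteratedFDeriv_zero_apply, h]
  exact_mod_cast this

lemma vOrder_ne_top' {F : Type*} [NormedAddCommGroup F] [NormedSpace ℂ F] [CompleteSpace F]
    {u : ℂ → F} (hu : AnalyticAt ℂ u 0)
    (hnc : ¬ (∀ᶠ t in 𝓝 (0:ℂ), u t = 0)) : vOrder u 0 ≠ ⊤ := by
  intro htop
  rw [vOrder_eq_top_iff'] at htop
  have hu' : AnalyticAt ℝ u 0 := hu.restrictScalars
  obtain ⟨p, rr, hpr⟩ := hu'
  apply hnc
  have hball : EMetric.ball (0:ℂ) (min rr 1) ∈ 𝓝 (0:ℂ) :=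
    EMetric.ball_mem_nhds _ (lt_min hpr.r_pos (by norm_num))
  filter_upwards [hball] with y hy
  have hy' : y ∈ EMetric.ball (0:ℂ) rr := EMetric.ball_subset_ball (min_le_left _ _) hy
  have hsum := hpr.hasSum_iteratedFDeriv (y := y) hy'
  have hz : HasSum (fun n : ℕ => (0 : F)) (u (0 + y)) := by
    convert hsum with n
    rw [htop n]
    simp
  simpa using hz.unique hasSum_zero

/-- For a curve germ, the order `curveOrd x₀ φ` is a finite positive natural number. -/
lemma curveOrd_exists_nat {n : ℕ} {x₀ : Cn n} {φ : ℂ → Cn n} (hφ : IsCurveGerm n x₀ φ) :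
    ∃ ν : ℕ, 1 ≤ ν ∧ curveOrd x₀ φ = ν := by
  have hne : curveOrd x₀ φ ≠ ⊤ := by
    refine vOrder_ne_top' (hφ.analyticAt.sub analyticAt_const) ?_
    intro h
    exact hφ.nonconst (h.mono fun t ht => by rwa [sub_eq_zero] at ht)
  obtain ⟨ν, hν⟩ := Option.ne_none_iff_exists'.mp hne
  refine ⟨ν, ?_, hν⟩
  have h1 : 1 ≤ curveOrd x₀ φ := one_le_vOrder' (by simp [hφ.init])
  rw [hν, WithTop.some_eq_coe] at h1
  refine Nat.one_le_iff_ne_zero.mpr fun h0 => ?_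
  subst h0
  exact absurd (show (1:ℕ∞) ≤ 0 from h1) (by simp)

lemma OrderedFinpartition.sum_partSize {m : ℕ} (c : OrderedFinpartition m) :
    ∑ i, c.partSize i = m := by
  classical
  have := Fintype.card_congr c.equivSigma
  simpa [Fintype.card_sigma] using this

/-- Faà di Bruno: if all derivatives of `g` up to order `k` vanish at `φ x` and all
derivatives of `φ` of order `1 ≤ j < ν` vanish at `x`, then the derivatives of `g ∘ φ`
of order `< (k+1)ν` vanish at `x`. -/
lemma key_vanish {E F G : Type*} [NormedAddCommGroup E] [NormedSpace ℝ E]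
    [NormedAddCommGroup F] [NormedSpace ℝ F]
    [NormedAddCommGroup G] [NormedSpace ℝ G] {g : F → G} {φ : E → F} {U : Set E} {x : E}
    (hU : IsOpen U) (hx : x ∈ U) (hφ : ContDiffOn ℝ ∞ φ U) (hg : ContDiff ℝ ∞ g)
    (k ν : ℕ)
    (hgz : ∀ j ≤ k, iteratedFDeriv ℝ j g (φ x) = 0)
    (hφz : ∀ j, 1 ≤ j → j < ν → iteratedFDeriv ℝ j φ x = 0)
    {m : ℕ} (hm : m < (k+1)*ν) :
    iteratedFDeriv ℝ m (fun y => g (φ y)) x = 0 := by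
  classical
  have hq : HasFTaylorSeriesUpToOn ∞ g (ftaylorSeries ℝ g) Set.univ := by
    rw [← ftaylorSeriesWithin_univ]
    exact (hg.contDiffOn).ftaylorSeriesWithin uniqueDiffOn_univ
  have hp : HasFTaylorSeriesUpToOn ∞ φ (ftaylorSeriesWithin ℝ φ U) U :=
    hφ.ftaylorSeriesWithin hU.uniqueDiffOn
  have hcomp := hq.comp hp (Set.mapsTo_univ _ _)
  have heq : ((ftaylorSeries ℝ g (φ x)).taylorComp (ftaylorSeriesWithin ℝ φ U x)) m =
      iteratedFDerivWithin ℝ m (g ∘ φ) U x :=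
    hcomp.eq_iteratedFDerivWithin_of_uniqueDiffOn (by exact_mod_cast le_top)
      hU.uniqueDiffOn hx
  have hwithin : iteratedFDerivWithin ℝ m (g ∘ φ) U x = iteratedFDeriv ℝ m (g ∘ φ) x :=
    iteratedFDerivWithin_of_isOpen m hU hx
  have hz : iteratedFDeriv ℝ m (g ∘ φ) x = 0 := by
    rw [← hwithin, ← heq]
    rw [FormalMultilinearSeries.taylorComp]
    apply Finset.sum_eq_zero
    intro c _
    rcases le_or_gt c.length k with hlen | hlen
    · have hqz : ftaylorSeries ℝ g (φ x) c.length = 0 := hgz c.length hlen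
      ext v
      simp only [FormalMultilinearSeries.compAlongOrderedFinpartition_apply, hqz,
        ContinuousMultilinearMap.zero_apply]
    · have hν : 0 < ν := Nat.pos_of_ne_zero (fun h => by simp [h] at hm)
      have hexists : ∃ i : Fin c.length, c.partSize i < ν := by
        by_contra hall
        push_neg at hall
        have : (k+1) * ν ≤ m := by
          calc (k+1) * ν ≤ c.length * ν := Nat.mul_le_mul_right ν hlen
          _ = ∑ _i : Fin c.length, ν := by simp [Finset.sum_const, mul_comm]
          _ ≤ ∑ i, c.partSize i := Finset.sum_le_sum (fun i _ => hall i)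
          _ = m := c.sum_partSize
        omega
      obtain ⟨i, hi⟩ := hexists
      have hpz : ftaylorSeriesWithin ℝ φ U x (c.partSize i) = 0 := by
        have h0 : iteratedFDeriv ℝ (c.partSize i) φ x = 0 :=
          hφz _ (c.partSize_pos i) hi
        rw [ftaylorSeriesWithin]
        rw [iteratedFDerivWithin_of_isOpen _ hU hx]
        exact h0
      ext v
      simp only [FormalMultilinearSeries.compAlongOrderedFinpartition_apply,
        ContinuousMultilinearMap.zero_apply]
      apply ContinuousMultilinearMap.map_coord_zero _ i
      simp [OrderedFinpartition.applyOrderedFinpartition_apply, hpz]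
  exact hz

lemma curve_smoothOn {n : ℕ} {x₀ : Cn n} {φ : ℂ → Cn n} (hφ : IsCurveGerm n x₀ φ) :
    ∃ U : Set ℂ, IsOpen U ∧ (0:ℂ) ∈ U ∧ ContDiffOn ℝ ∞ φ U := by
  obtain ⟨V, hV, hVa⟩ := hφ.analyticAt.eventually_analyticAt.exists_mem
  obtain ⟨U, hUV, hUopen, hU0⟩ := mem_nhds_iff.mp hV
  refine ⟨U, hUopen, hU0, ?_⟩
  intro z hz
  exact ((hVa z (hUV hz)).restrictScalars.contDiffAt.of_le le_top).contDiffWithinAt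

/-- If the jets of `r` and `r'` agree up to order `k` at `x₀`, then for any curve germ `φ`
the derivatives of `r ∘ φ` and `r' ∘ φ` agree up to order `(k+1) · ord₀ φ - 1`. -/
lemma per_curve {n k : ℕ} {r r' : Cn n → ℝ} (hr : ContDiff ℝ ∞ r) (hr' : ContDiff ℝ ∞ r')
    {x₀ : Cn n} (hjet : ∀ m ≤ k, iteratedFDeriv ℝ m r' x₀ = iteratedFDeriv ℝ m r x₀)
    {φ : ℂ → Cn n} (hφ : IsCurveGerm n x₀ φ) {ν : ℕ} (hν : (ν : ℕ∞) ≤ curveOrd x₀ φ)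
    {m : ℕ} (hm : m < (k+1)*ν) :
    iteratedFDeriv ℝ m (fun t => r' (φ t)) 0 = iteratedFDeriv ℝ m (fun t => r (φ t)) 0 := by
  obtain ⟨U, hUopen, hU0, hφU⟩ := curve_smoothOn hφ
  set g : Cn n → ℝ := fun z => r' z - r z with hgdef
  have hg : ContDiff ℝ ∞ g := hr'.sub hr
  have hgz : ∀ j ≤ k, iteratedFDeriv ℝ j g x₀ = 0 := by
    intro j hj
    have hsum : iteratedFDeriv ℝ j (fun z => r z + g z) x₀
        = iteratedFDeriv ℝ j r x₀ + iteratedFDeriv ℝ j g x₀ :=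
      iteratedFDeriv_add_apply' (hr.contDiffAt.of_le (by exact_mod_cast le_top))
        (hg.contDiffAt.of_le (by exact_mod_cast le_top))
    have hfun : (fun z => r z + g z) = r' := by funext z; simp [hgdef]
    rw [hfun, hjet j hj] at hsum
    exact left_eq_add.mp hsum
  have hφz : ∀ j, 1 ≤ j → j < ν → iteratedFDeriv ℝ j φ 0 = 0 := by
    intro j hj1 hjν
    have hsub : iteratedFDeriv ℝ j (fun t => φ t - x₀) 0 = 0 := by
      by_contra hne
      have h1 := le_trans hν (vOrder_le' hne)
      exact absurd (by exact_mod_cast h1) (not_le.mpr hjν)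
    have hcd : ContDiffOn ℝ (j : ℕ∞) (fun t => φ t - x₀) U :=
      (hφU.sub contDiffOn_const).of_le (by exact_mod_cast le_top)
    have hsum : iteratedFDerivWithin ℝ j (fun t => (φ t - x₀) + x₀) U 0
        = iteratedFDerivWithin ℝ j (fun t => φ t - x₀) U 0
          + iteratedFDerivWithin ℝ j (fun _ => x₀) U 0 :=
      iteratedFDerivWithin_add_apply' (hcd 0 hU0) contDiffWithinAt_const hUopen.uniqueDiffOn hU0
    have hfun : (fun t => (φ t - x₀) + x₀) = φ := by funext t; abel
    rw [hfun] at hsum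
    rw [iteratedFDerivWithin_of_isOpen _ hUopen hU0] at hsum
    rw [hsum, iteratedFDerivWithin_of_isOpen _ hUopen hU0, hsub,
      iteratedFDerivWithin_of_isOpen _ hUopen hU0, iteratedFDeriv_const_of_ne (by omega)]
    simp
  have hkey : iteratedFDeriv ℝ m (fun t => g (φ t)) 0 = 0 :=
    key_vanish hUopen hU0 hφU hg k ν (by simpa [hφ.init] using hgz) hφz hm
  have hrφ : ContDiffOn ℝ (m : ℕ∞) (fun t => r (φ t)) U :=
    (hr.of_le (by exact_mod_cast le_top)).comp_contDiffOn
      (hφU.of_le (by exact_mod_cast le_top))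
  have hgφ : ContDiffOn ℝ (m : ℕ∞) (fun t => g (φ t)) U :=
    (hg.of_le (by exact_mod_cast le_top)).comp_contDiffOn
      (hφU.of_le (by exact_mod_cast le_top))
  have hsum : iteratedFDerivWithin ℝ m (fun t => r (φ t) + g (φ t)) U 0
      = iteratedFDerivWithin ℝ m (fun t => r (φ t)) U 0
        + iteratedFDerivWithin ℝ m (fun t => g (φ t)) U 0 :=
    iteratedFDerivWithin_add_apply' (hrφ 0 hU0) (hgφ 0 hU0) hUopen.uniqueDiffOn hU0
  have hfun : (fun t => r (φ t) + g (φ t)) = fun t => r' (φ t) := by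
    funext t; simp [hgdef]
  rw [hfun] at hsum
  rw [iteratedFDerivWithin_of_isOpen _ hUopen hU0] at hsum
  rw [hsum, iteratedFDerivWithin_of_isOpen _ hUopen hU0,
    iteratedFDerivWithin_of_isOpen _ hUopen hU0, hkey]
  simp

/-- If the type ratio of a curve (w.r.t. `r`) is `< k+1`, then the ratio w.r.t. `r'` is the
same, provided the jets of `r` and `r'` agree up to order `k`. -/
lemma ratio_congr {n k : ℕ} {r r' : Cn n → ℝ} (hr : ContDiff ℝ ∞ r) (hr' : ContDiff ℝ ∞ r')
    {x₀ : Cn n} (hjet : ∀ m ≤ k, iteratedFDeriv ℝ m r' x₀ = iteratedFDeriv ℝ m r x₀)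
    {φ : ℂ → Cn n} (hφ : IsCurveGerm n x₀ φ)
    (h : typeRatio (vOrder (fun t => r (φ t)) 0) (curveOrd x₀ φ) < ((k:ℝ≥0∞) + 1)) :
    typeRatio (vOrder (fun t => r' (φ t)) 0) (curveOrd x₀ φ)
      = typeRatio (vOrder (fun t => r (φ t)) 0) (curveOrd x₀ φ) := by
  obtain ⟨ν, hν1, hνeq⟩ := curveOrd_exists_nat hφ
  set a := vOrder (fun t => r (φ t)) 0 with ha
  have hνle : (ν : ℕ∞) ≤ curveOrd x₀ φ := le_of_eq hνeq.symm
  -- translate the ratio bound into `a < (k+1)·ν` in `ℕ∞`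
  have hlt : a < (((k+1)*ν : ℕ) : ℕ∞) := by
    rw [typeRatio, hνeq] at h
    have hν0 : ((ν : ℕ∞) : ℝ≥0∞) ≠ 0 := by
      simp [ENat.toENNReal_coe]
      omega
    have hνt : ((ν : ℕ∞) : ℝ≥0∞) ≠ ⊤ := by
      simp [ENat.toENNReal_coe]
    rw [ENNReal.div_lt_iff (Or.inl hν0) (Or.inl hνt)] at h
    have : (a : ℝ≥0∞) < ((((k+1)*ν : ℕ) : ℕ∞) : ℝ≥0∞) := by
      refine lt_of_lt_of_le h ?_
      rw [ENat.toENNReal_coe]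
      push_cast
      ring_nf
      exact le_rfl
    exact_mod_cast ENat.toENNReal_lt.mp this
  have hvord : vOrder (fun t => r' (φ t)) 0 = a := by
    refine vOrder_congr_of_lt' (fun j hj => ?_) hlt
    have hjlt : j < (k+1)*ν := by exact_mod_cast hj
    exact (per_curve hr hr' hjet hφ hνle hjlt).symm
  rw [hvord]

/-- One-sided comparison of `Δ₁` on a set of curves, under jet agreement. -/
lemma Delta1On_congr {n k : ℕ} {r r' : Cn n → ℝ} (hr : ContDiff ℝ ∞ r) (hr' : ContDiff ℝ ∞ r')
    {x₀ : Cn n} (hjet : ∀ m ≤ k, iteratedFDeriv ℝ m r' x₀ = iteratedFDeriv ℝ m r x₀)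
    (Z : Set (Cn n)) (h : Delta1On n r x₀ Z < ((k:ℝ≥0∞) + 1)) :
    Delta1On n r' x₀ Z = Delta1On n r x₀ Z := by
  refine iSup_congr fun φ => iSup_congr fun hφ => iSup_congr fun hZ => ?_
  refine ratio_congr hr hr' hjet hφ (lt_of_le_of_lt ?_ h)
  refine le_iSup_of_le φ (le_iSup_of_le hφ (le_iSup_of_le hZ le_rfl))

/-- One-sided comparison of `Δ_q`, under jet agreement up to order `k ≥ Δ_q(r)`. -/
lemma DeltaQ_le {n q k : ℕ} {r r' : Cn n → ℝ} (hr : ContDiff ℝ ∞ r) (hr' : ContDiff ℝ ∞ r')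
    {x₀ : Cn n} (hjet : ∀ m ≤ k, iteratedFDeriv ℝ m r' x₀ = iteratedFDeriv ℝ m r x₀)
    (hk : DeltaQHyp n q r x₀ ≤ (k : ℝ≥0∞)) :
    DeltaQHyp n q r' x₀ ≤ DeltaQHyp n q r x₀ := by
  by_contra hcon
  push_neg at hcon
  set c : ℝ≥0∞ := min ((k:ℝ≥0∞) + 1) (DeltaQHyp n q r' x₀) with hc
  have hlt : DeltaQHyp n q r x₀ < c := by
    refine lt_min (lt_of_le_of_lt hk ?_) hcon
    exact ENNReal.lt_add_right (by simp) one_ne_zero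
  obtain ⟨w, hw⟩ := iInf_lt_iff.mp hlt
  obtain ⟨hwli, hSlt⟩ := iInf_lt_iff.mp hw
  have hS1 : Delta1On n r x₀ (zeroLocus x₀ w) < ((k:ℝ≥0∞) + 1) :=
    lt_of_lt_of_le hSlt (min_le_left _ _)
  have heq := Delta1On_congr hr hr' hjet (zeroLocus x₀ w) hS1
  have : DeltaQHyp n q r' x₀ < c := by
    refine lt_of_le_of_lt ?_ hSlt
    rw [← heq]
    exact iInf₂_le w hwli
  exact absurd this (not_lt.mpr (min_le_right _ _))

end Statement3Aux


/-- finite determination of `Δ_q`: if `t = Δ_q(M, x₀) < ∞` and `k = ⌈t⌉`, then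
any smooth real hypersurface `M'` through `x₀` whose defining function `r'` has the same `k`-jet
at `x₀` as `r` satisfies `Δ_q(M', x₀) = Δ_q(M, x₀)`. -/
theorem statement_3 (n q : ℕ) (hq1 : 1 ≤ q) (hq2 : q < n)
    (r : Cn n → ℝ) (x₀ : Cn n)
    (hr : ContDiff ℝ (⊤ : ℕ∞) r) (hx₀ : r x₀ = 0)
    (hgrad : ∀ z, r z = 0 → fderiv ℝ r z ≠ 0)
    (hfin : DeltaQHyp n q r x₀ ≠ ⊤)
    (k : ℕ) (hk : k = ⌈(DeltaQHyp n q r x₀).toReal⌉₊)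
    (r' : Cn n → ℝ) (hr' : ContDiff ℝ (⊤ : ℕ∞) r')
    (hgrad' : fderiv ℝ r' x₀ ≠ 0)
    (hjet : ∀ m : ℕ, m ≤ k → iteratedFDeriv ℝ m r' x₀ = iteratedFDeriv ℝ m r x₀) :
    DeltaQHyp n q r' x₀ = DeltaQHyp n q r x₀ := by
  have hrS : ContDiff ℝ (⊤ : ℕ∞) r := hr.of_le (by simp)
  have hrS' : ContDiff ℝ (⊤ : ℕ∞) r' := hr'.of_le (by simp)
  have hjet' : ∀ m ≤ k, iteratedFDeriv ℝ m r x₀ = iteratedFDeriv ℝ m r' x₀ :=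
    fun m hm => (hjet m hm).symm
  have hk1 : DeltaQHyp n q r x₀ ≤ (k : ℝ≥0∞) := by
    rw [hk]
    rw [← ENNReal.ofReal_natCast]
    rw [ENNReal.le_ofReal_iff_toReal_le hfin (by positivity)]
    exact_mod_cast Nat.le_ceil _
  have h1 : DeltaQHyp n q r' x₀ ≤ DeltaQHyp n q r x₀ := DeltaQ_le hrS hrS' hjet hk1
  have hk2 : DeltaQHyp n q r' x₀ ≤ (k : ℝ≥0∞) := le_trans h1 hk1
  have h2 : DeltaQHyp n q r x₀ ≤ DeltaQHyp n q r' x₀ := DeltaQ_le hrS' hrS hjet' hk2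
  exact le_antisymm h1 h2

end
end
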